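/- arXiv:2201.12435 — 2 statements merged into one kernel-verified Lean document; each statement's English description precedes it below -/
import Mathlib

section
/- Let 0 < φ, γ < 1 and let p_{xy} = φ_y(1 + κ(1 - x/γ)(1 - y/φ)) for x,y ∈ {0,1}, where φ_1 = φ, φ_0 = 1-φ. If φ + γ ≥ 1, then p_{xy} ≥ 0 for all x,y ∈ {0,1} if and only if -1 ≤ κ ≤ α/(1-α), where α = min(φ,γ). -/
/-!
Evaluating at the four corners, `p₀₀ ≥ 0` says `κ ≥ -1`, and `p₀₁ ≥ 0`, `p₁₀ ≥ 0` say
`κ (1 - φ) ≤ φ` and `κ (1 - γ) ≤ γ`. Since `t ↦ t / (1 - t)` is increasing on `(-∞, 1)`, these two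
together say `κ ≤ α / (1 - α)`. The last corner is then automatic: `p₁₁ ≥ 0` reads
`γ φ + κ (1 - γ)(1 - φ) ≥ 0`, and for `κ ≥ -1` the left side is at least `φ + γ - 1 ≥ 0`.
-/

lemma mul_one_sub_le_self_of_le {κ s t : ℝ} (hst : s ≤ t) (ht : t ≤ 1) (hs : κ * (1 - s) ≤ s) :
    κ * (1 - t) ≤ t := by
  rcases ht.lt_or_eq with ht | rfl
  · have hs' : s < 1 := hst.trans_lt ht
    rw [← le_div_iff₀ (sub_pos.2 ht)]
    rw [← le_div_iff₀ (sub_pos.2 hs')] at hs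
    refine hs.trans ?_
    rw [div_le_div_iff₀ (sub_pos.2 hs') (sub_pos.2 ht)]
    linarith
  · simp

lemma le_min_div_one_sub_min_iff {κ a b : ℝ} (ha : a < 1) (hb : b < 1) :
    κ ≤ min a b / (1 - min a b) ↔ κ * (1 - a) ≤ a ∧ κ * (1 - b) ≤ b := by
  rw [le_div_iff₀ (sub_pos.2 (min_lt_of_left_lt ha))]
  rcases le_total a b with hab | hba
  · rw [min_eq_left hab]
    exact ⟨fun h => ⟨h, mul_one_sub_le_self_of_le hab hb.le h⟩, And.left⟩
  · rw [min_eq_right hba]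
    exact ⟨fun h => ⟨mul_one_sub_le_self_of_le hba ha.le h, h⟩, And.right⟩

lemma mul_one_add_mul_one_sub_one_div_nonneg_iff {c κ t : ℝ} (hc : 0 < c) (ht : 0 < t) :
    0 ≤ c * (1 + κ * (1 - 1 / t)) ↔ κ * (1 - t) ≤ t := by
  have h : c * (1 + κ * (1 - 1 / t)) = c / t * (t - κ * (1 - t)) := by
    field_simp
    ring
  rw [h, mul_nonneg_iff_of_pos_left (div_pos hc ht), sub_nonneg]

lemma mul_one_add_mul_one_sub_one_div_mul_one_sub_one_div_nonneg {φ γ κ : ℝ} (hφ : 0 < φ)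
    (hφ1 : φ < 1) (hγ : 0 < γ) (hγ1 : γ < 1) (hsum : 1 ≤ φ + γ) (hκ : -1 ≤ κ) :
    0 ≤ φ * (1 + κ * (1 - 1 / γ) * (1 - 1 / φ)) := by
  have h : φ * (1 + κ * (1 - 1 / γ) * (1 - 1 / φ)) = (γ * φ + κ * ((1 - γ) * (1 - φ))) / γ := by
    field_simp
    ring
  have hprod : 0 ≤ (1 - γ) * (1 - φ) := mul_nonneg (by linarith) (by linarith)
  rw [h]
  refine div_nonneg ?_ hγ.le
  nlinarith [mul_le_mul_of_nonneg_right hκ hprod]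

theorem stmt_0 (φ γ κ : ℝ) (hφ : 0 < φ) (hφ1 : φ < 1) (hγ : 0 < γ) (hγ1 : γ < 1)
    (hsum : 1 ≤ φ + γ) :
    (∀ x ∈ ({0, 1} : Set ℝ), ∀ y ∈ ({0, 1} : Set ℝ),
      0 ≤ (if y = 1 then φ else 1 - φ) * (1 + κ * (1 - x / γ) * (1 - y / φ))) ↔
      (-1 ≤ κ ∧ κ ≤ min φ γ / (1 - min φ γ)) := by
  have hφ' : 0 < 1 - φ := sub_pos.2 hφ1
  simp only [Set.forall_mem_insert, Set.mem_singleton_iff, forall_eq, zero_div, sub_zero, mul_one,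
    if_neg zero_ne_one, if_pos]
  rw [mul_nonneg_iff_of_pos_left hφ', ← neg_le_iff_add_nonneg',
    mul_one_add_mul_one_sub_one_div_nonneg_iff hφ hφ,
    mul_one_add_mul_one_sub_one_div_nonneg_iff hφ' hγ, le_min_div_one_sub_min_iff hφ1 hγ1]
  constructor
  · rintro ⟨⟨h00, h01⟩, h10, -⟩
    exact ⟨h00, h01, h10⟩
  · rintro ⟨h00, h01, h10⟩
    exact ⟨⟨h00, h01⟩, h10,
      mul_one_add_mul_one_sub_one_div_mul_one_sub_one_div_nonneg hφ hφ1 hγ hγ1 hsum h00⟩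
end

section
/- Fixed point identity for the limiting Bernoulli parameter: let φ, γ ∈ (0,1), φ + γ > 1, α = min(φ,γ), ψ as defined, and Z : ℕ → {0,1}. Define p = φ - (γ-φ)Σ_{l=1}^∞ ψ^l ∏_{j=1}^l (1 - Z_j/α). Let z₀ ∈ {0,1} and define Z# by Z#_1 = z₀, Z#_j = Z_{j-1} for j ≥ 2, and p# = φ - (γ-φ)Σ_{l=1}^∞ ψ^l ∏_{j=1}^l (1 - Z#_j/α). Then p# = φ - γψ(1 - z₀/α)(1 - p/γ). -/
/-!
Writing `b j = ψ (1 - Z j / α)`, both series are tails of `S = ∑ₗ ∏_{j<l} b j`: the series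
defining `p` is `S - 1`, and since the shifted sequence has factors `b# 0 = ψ (1 - z₀ / α)` and
`b# (j + 1) = b j`, the series defining `p#` is `b# 0 · S`. Hence `γ - p = (γ - φ) S` and the
identity is algebra. The only analysis is that `S` converges when `φ ≠ γ`, because then every
`|b j|` is bounded by a constant below `1`; when `φ = γ` both series are multiplied by `0`.
-/

open Finset

section PartialProducts

variable {𝕜 : Type*} [NormedField 𝕜]

theorem summable_prod_range_of_norm_le [CompleteSpace 𝕜] {b : ℕ → 𝕜} {r : ℝ}
    (hb : ∀ j, ‖b j‖ ≤ r) (hr : r < 1) : Summable fun l => ∏ j ∈ range l, b j := by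
  have hr0 : 0 ≤ r := (norm_nonneg _).trans (hb 0)
  refine Summable.of_norm_bounded (summable_geometric_of_lt_one hr0 hr) fun l => ?_
  calc ‖∏ j ∈ range l, b j‖ = ∏ j ∈ range l, ‖b j‖ := norm_prod _ _
    _ ≤ ∏ _j ∈ range l, r := prod_le_prod (fun _ _ => norm_nonneg _) fun j _ => hb j
    _ = r ^ l := by rw [prod_const, card_range]

theorem tsum_prod_range_succ (b : ℕ → 𝕜) :
    ∑' l, ∏ j ∈ range (l + 1), b j = b 0 * ∑' l, ∏ j ∈ range l, b (j + 1) := by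
  simp_rw [prod_range_succ']
  rw [← tsum_mul_left]
  exact tsum_congr fun l => mul_comm _ _

theorem tsum_prod_range_succ_eq_sub_one {b : ℕ → 𝕜}
    (hb : Summable fun l => ∏ j ∈ range l, b j) :
    ∑' l, ∏ j ∈ range (l + 1), b j = ∑' l, ∏ j ∈ range l, b j - 1 := by
  rw [hb.tsum_eq_zero_add, prod_range_zero, add_sub_cancel_left]

end PartialProducts

section Parameters

variable {φ γ ψ : ℝ}

theorem limit_ratio_bounds (hφ : 0 < φ) (hφ1 : φ < 1) (hγ : 0 < γ) (hsum : 1 < φ + γ)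
    (hne : φ ≠ γ) (hψ : ψ = if φ ≤ γ then φ / γ else (1 - φ) / (1 - γ)) :
    0 ≤ ψ ∧ ψ < 1 ∧ ψ * (1 / min φ γ - 1) < 1 := by
  rcases hne.lt_or_gt with h | h
  · rw [hψ, if_pos h.le, min_eq_left h.le]
    refine ⟨by positivity, (div_lt_one hγ).mpr h, ?_⟩
    -- `ψ (1/α - 1) = (1 - φ) / γ` in both cases
    rw [show φ / γ * (1 / φ - 1) = (1 - φ) / γ by field_simp]
    exact (div_lt_one hγ).mpr (by linarith)
  · have hγ1 : 0 < 1 - γ := by linarith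
    rw [hψ, if_neg h.not_ge, min_eq_right h.le]
    refine ⟨div_nonneg (by linarith) hγ1.le, (div_lt_one hγ1).mpr (by linarith), ?_⟩
    rw [show (1 - φ) / (1 - γ) * (1 / γ - 1) = (1 - φ) / γ by field_simp]
    exact (div_lt_one hγ).mpr (by linarith)

theorem abs_mul_one_sub_div_le {α : ℝ} (hψ : 0 ≤ ψ) (hα : 0 < α) (hα1 : α ≤ 1) {z : ℕ}
    (hz : z = 0 ∨ z = 1) : |ψ * (1 - (z : ℝ) / α)| ≤ max ψ (ψ * (1 / α - 1)) := by
  rcases hz with rfl | rfl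
  · simp [abs_of_nonneg hψ]
  · have : 1 ≤ 1 / α := one_le_one_div hα hα1
    rw [Nat.cast_one, abs_mul, abs_of_nonneg hψ, abs_of_nonpos (by linarith), neg_sub]
    exact le_max_right _ _

end Parameters

theorem stmt_11_general (φ γ : ℝ) (hφ : 0 < φ) (hφ1 : φ < 1) (hγ : 0 < γ)
    (hsum : 1 < φ + γ) (α ψ : ℝ) (hα : α = min φ γ)
    (hψ : ψ = if φ ≤ γ then φ / γ else (1 - φ) / (1 - γ))
    (Z : ℕ → ℕ) (hZ : ∀ j, Z j = 0 ∨ Z j = 1)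
    (z₀ : ℕ)
    (Zs : ℕ → ℕ) (hZs0 : Zs 0 = z₀) (hZsS : ∀ j, Zs (j + 1) = Z j)
    (p ps : ℝ)
    (hp : p = φ - (γ - φ) *
      ∑' l : ℕ, ψ ^ (l + 1) * ∏ j ∈ Finset.range (l + 1), (1 - (Z j : ℝ) / α))
    (hps : ps = φ - (γ - φ) *
      ∑' l : ℕ, ψ ^ (l + 1) * ∏ j ∈ Finset.range (l + 1), (1 - (Zs j : ℝ) / α)) :
    ps = φ - γ * ψ * (1 - (z₀ : ℝ) / α) * (1 - p / γ) := by
  rcases eq_or_ne φ γ with rfl | hne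
  · rw [hps, hp]
    field_simp
    ring
  obtain ⟨hψ0, hψ1, hψα⟩ := hα ▸ limit_ratio_bounds hφ hφ1 hγ hsum hne hψ
  have hα0 : 0 < α := hα ▸ lt_min hφ hγ
  have hα1 : α ≤ 1 := hα ▸ (min_le_left _ _).trans hφ1.le
  have hS : Summable fun l => ∏ j ∈ range l, ψ * (1 - (Z j : ℝ) / α) :=
    summable_prod_range_of_norm_le (fun j => abs_mul_one_sub_div_le hψ0 hα0 hα1 (hZ j))
      (max_lt hψ1 hψα)
  have pow_mul_prod (n : ℕ) (a : ℕ → ℝ) :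
      ψ ^ n * ∏ j ∈ range n, a j = ∏ j ∈ range n, ψ * a j := by
    simpa using pow_card_mul_prod (s := range n) (f := a) (b := ψ)
  simp_rw [pow_mul_prod] at hp hps
  rw [tsum_prod_range_succ_eq_sub_one hS] at hp
  rw [tsum_prod_range_succ, hZs0] at hps
  simp_rw [hZsS] at hps
  rw [hps, hp]
  field_simp
  ring

theorem stmt_11 (φ γ : ℝ) (hφ : 0 < φ) (hφ1 : φ < 1) (hγ : 0 < γ) (hγ1 : γ < 1)
    (hsum : 1 < φ + γ) (α ψ : ℝ) (hα : α = min φ γ)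
    (hψ : ψ = if φ ≤ γ then φ / γ else (1 - φ) / (1 - γ))
    (Z : ℕ → ℕ) (hZ : ∀ j, Z j = 0 ∨ Z j = 1)
    (z₀ : ℕ) (hz₀ : z₀ = 0 ∨ z₀ = 1)
    (Zs : ℕ → ℕ) (hZs0 : Zs 0 = z₀) (hZsS : ∀ j, Zs (j + 1) = Z j)
    (p ps : ℝ)
    (hp : p = φ - (γ - φ) *
      ∑' l : ℕ, ψ ^ (l + 1) * ∏ j ∈ Finset.range (l + 1), (1 - (Z j : ℝ) / α))
    (hps : ps = φ - (γ - φ) *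
      ∑' l : ℕ, ψ ^ (l + 1) * ∏ j ∈ Finset.range (l + 1), (1 - (Zs j : ℝ) / α)) :
    ps = φ - γ * ψ * (1 - (z₀ : ℝ) / α) * (1 - p / γ) :=
  stmt_11_general φ γ hφ hφ1 hγ hsum α ψ hα hψ Z hZ z₀ Zs hZs0 hZsS p ps hp hps
end
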